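/- arXiv:2012.01613 — 3 statements merged into one kernel-verified Lean document; each statement's English description precedes it below -/
import Mathlib

section
/- Let $0 < T \le \infty$, $C_0 \ge 0$, $\tau > 0$, $G > 0$, and let $\beta : [0, T) \to \mathbb{R}^+$ be locally integrable. Suppose $C : [-\tau, T) \to \mathbb{R}^+$ is measurable, locally bounded, satisfies $C(s) = C_0$ for all $s \in [-\tau, 0]$, and solves the delay differential equation $C'(t) = \beta(t) C(t) - G\, C(t - \tau)$ for $t \in [0, T)$. Then for all $t \in [0, T)$, $C(t) \le C_0 \exp\left( \int_0^t \big(\beta(s) + \gamma(s)\big)\, ds \right)$, where $\gamma(t) := -G \exp\left( -\int_{t-\tau}^t \beta(s)\, ds \right)$ (with $\beta$ extended by $0$ to negative arguments, or any nonnegative extension agreeing on $[0,T)$). -/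
open MeasureTheory intervalIntegral

/-- Lipschitz-type bound for `exp` on `(-∞, 1]`. -/
lemma exp_abs_sub_le {p q : ℝ} (hp : p ≤ 1) (hq : q ≤ 1) :
    |Real.exp p - Real.exp q| ≤ Real.exp 1 * |p - q| := by
  have key : ∀ r s : ℝ, s ≤ r → r ≤ 1 → Real.exp r - Real.exp s ≤ Real.exp 1 * (r - s) := by
    intro r s hsr hr1
    have h1 : (s - r) + 1 ≤ Real.exp (s - r) := Real.add_one_le_exp _
    have h2 : Real.exp s = Real.exp r * Real.exp (s - r) := by
      rw [← Real.exp_add]; ring_nf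
    have h3 : Real.exp r ≤ Real.exp 1 := Real.exp_le_exp.2 hr1
    nlinarith [Real.exp_pos r]
  rcases le_total q p with h | h
  · rw [abs_of_nonneg (by nlinarith [Real.exp_le_exp.2 h] : (0:ℝ) ≤ Real.exp p - Real.exp q),
      abs_of_nonneg (by linarith : (0:ℝ) ≤ p - q)]
    exact key p q h hp
  · rw [abs_of_nonpos (by nlinarith [Real.exp_le_exp.2 h] : Real.exp p - Real.exp q ≤ 0),
      abs_of_nonpos (by linarith : p - q ≤ 0)]
    have := key q p h hq
    linarith

/-- Key integral identity, proven by approximating `β` in `L¹` by continuous functions. -/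
lemma co2_keyA (τ G M a b : ℝ) (hτ : 0 < τ) (hG : 0 < G) (hMnonneg : 0 ≤ M)
    (ha : 0 ≤ a) (hab : a ≤ b) (β C : ℝ → ℝ)
    (hβ_loc : ∀ p q : ℝ, IntervalIntegrable β volume p q)
    (hβ_nonneg : ∀ t, 0 ≤ β t)
    (hC_meas : Measurable C)
    (hM : ∀ s ∈ Set.Icc (a - τ) b, |C s| ≤ M)
    (hODE : ∀ t ∈ Set.Icc a b, HasDerivAt C (β t * C t - G * C (t - τ)) t) :
    C b * Real.exp (-(∫ s in (0:ℝ)..b, β s)) - C a * Real.exp (-(∫ s in (0:ℝ)..a, β s))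
      = -G * ∫ s in a..b, Real.exp (-(∫ u in (0:ℝ)..s, β u)) * C (s - τ) := by
  set B : ℝ → ℝ := fun t => ∫ s in (0:ℝ)..t, β s with hBdef
  have hBcont : Continuous B := intervalIntegral.continuous_primitive hβ_loc 0
  have hBadd : ∀ x y : ℝ, B y - B x = ∫ s in x..y, β s := by
    intro x y
    have h := intervalIntegral.integral_add_adjacent_intervals (hβ_loc 0 x) (hβ_loc x y)
    simp only [hBdef]
    linarith
  have hB0 : B 0 = 0 := intervalIntegral.integral_same
  have hBmono : Monotone B := by
    intro x y hxy
    have h := hBadd x y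
    have h2 : 0 ≤ ∫ s in x..y, β s :=
      intervalIntegral.integral_nonneg hxy fun u _ => hβ_nonneg u
    linarith
  have hInt_mulC : ∀ (h : ℝ → ℝ), IntervalIntegrable h volume a b →
      IntervalIntegrable (fun s => h s * C s) volume a b := by
    intro h hh
    rw [intervalIntegrable_iff] at hh ⊢
    have key : Integrable (fun s => C s * h s) (volume.restrict (Set.uIoc a b)) := by
      apply Integrable.bdd_mul (c := M) hh
        (hC_meas.aestronglyMeasurable.restrict)
      filter_upwards [ae_restrict_mem measurableSet_uIoc] with x hx
      have hx1 : a < x := lt_of_le_of_lt (le_inf le_rfl hab) hx.1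
      have hx2 : x ≤ b := le_trans hx.2 (sup_le hab le_rfl)
      exact hM x ⟨by linarith, hx2⟩
    have heqf : (fun s => h s * C s) = fun s => C s * h s := by funext s; ring
    rw [heqf]; exact key
  have hInt_Cdel : IntervalIntegrable (fun s => C (s - τ)) volume a b := by
    rw [intervalIntegrable_iff]
    have hmeas2 : Measurable fun s : ℝ => C (s - τ) :=
      hC_meas.comp (measurable_id.sub measurable_const)
    apply Integrable.mono' (f := fun s : ℝ => C (s - τ)) (g := fun _ => M)
      (integrableOn_const measure_Ioc_lt_top.ne)
      (hmeas2.aestronglyMeasurable.restrict)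
    filter_upwards [ae_restrict_mem measurableSet_uIoc] with x hx
    have hx1 : a < x := lt_of_le_of_lt (le_inf le_rfl hab) hx.1
    have hx2 : x ≤ b := le_trans hx.2 (sup_le hab le_rfl)
    exact hM (x - τ) ⟨by linarith, by linarith⟩
  have hInt_main : IntervalIntegrable (fun s => Real.exp (-B s) * C (s - τ)) volume a b :=
    hInt_Cdel.continuousOn_mul
      ((hBcont.neg.rexp).continuousOn : ContinuousOn (fun s => Real.exp (-B s)) (Set.uIcc a b))
  show C b * Real.exp (-B b) - C a * Real.exp (-B a)
      = -G * ∫ s in a..b, Real.exp (-B s) * C (s - τ)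
  have hIint := hInt_main
  set I : ℝ := ∫ s in a..b, Real.exp (-B s) * C (s - τ) with hIdef
  set X : ℝ := C b * Real.exp (-B b) - C a * Real.exp (-B a) + G * I with hXdef
  have hK0 : (0:ℝ) ≤ Real.exp 1 * M * (3 + G * (b - a)) := by
    have h1 : (0:ℝ) ≤ 3 + G * (b - a) := by nlinarith
    exact mul_nonneg (mul_nonneg (Real.exp_pos _).le hMnonneg) h1
  have key : ∀ ε : ℝ, 0 < ε → ε ≤ 1 →
      |X| ≤ ε * (Real.exp 1 * M * (3 + G * (b - a))) := by
    intro ε hε hε1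
    set φ : ℝ → ℝ := (Set.Ioc (0:ℝ) b).indicator β with hφdef
    have hφint : Integrable φ volume :=
      ((hβ_loc 0 b).1).integrable_indicator measurableSet_Ioc
    obtain ⟨g, hgsupp, hgdist, hgcont, hgint⟩ :=
      hφint.exists_hasCompactSupport_integral_sub_le hε
    set Bg : ℝ → ℝ := fun t => ∫ s in (0:ℝ)..t, g s with hBgdef
    have hBg_deriv : ∀ t, HasDerivAt Bg (g t) t := fun t =>
      (hgcont.integral_hasStrictDerivAt 0 t).hasDerivAt
    have hBφ : ∀ s : ℝ, 0 ≤ s → s ≤ b → B s = ∫ x in (0:ℝ)..s, φ x := by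
      intro s h0 hsb
      have heqon : ∀ x ∈ Set.Ioc (0:ℝ) s, β x = φ x := by
        intro x hx
        have hmem : x ∈ Set.Ioc (0:ℝ) b := ⟨hx.1, hx.2.trans hsb⟩
        exact (Set.indicator_of_mem hmem β).symm
      simp only [hBdef]
      rw [intervalIntegral.integral_of_le h0, intervalIntegral.integral_of_le h0]
      exact setIntegral_congr_fun measurableSet_Ioc heqon
    have hL1 : ∀ s : ℝ, 0 ≤ s → s ≤ b → |Bg s - B s| ≤ ε := by
      intro s h0 hsb
      rw [hBφ s h0 hsb]
      have heq : Bg s - ∫ x in (0:ℝ)..s, φ x = ∫ x in (0:ℝ)..s, (g x - φ x) :=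
        (intervalIntegral.integral_sub (hgint.intervalIntegrable (a := 0) (b := s))
          (hφint.intervalIntegrable (a := 0) (b := s))).symm
      rw [heq]
      calc |∫ x in (0:ℝ)..s, (g x - φ x)| ≤ ∫ x in (0:ℝ)..s, |g x - φ x| :=
            intervalIntegral.abs_integral_le_integral_abs h0
        _ = ∫ x in Set.Ioc (0:ℝ) s, |g x - φ x| := by
            rw [intervalIntegral.integral_of_le h0]
        _ ≤ ∫ x, |g x - φ x| := setIntegral_le_integral ((hgint.sub hφint).abs)
            (Filter.Eventually.of_forall fun x => abs_nonneg _)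
        _ = ∫ x, ‖φ x - g x‖ := by
            congr 1; funext x; rw [Real.norm_eq_abs, abs_sub_comm]
        _ ≤ ε := hgdist
    have hBs0 : ∀ s : ℝ, 0 ≤ s → 0 ≤ B s := fun s hs => hB0 ▸ hBmono hs
    have hBgle : ∀ s : ℝ, 0 ≤ s → s ≤ b → -Bg s ≤ 1 := by
      intro s h0 hsb
      have h1 := (abs_le.1 (hL1 s h0 hsb)).1
      have h2 := hBs0 s h0
      linarith
    have hexp_close : ∀ s : ℝ, 0 ≤ s → s ≤ b →
        |Real.exp (-B s) - Real.exp (-Bg s)| ≤ Real.exp 1 * ε := by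
      intro s h0 hsb
      have h1 : -B s ≤ 1 := by linarith [hBs0 s h0]
      have h2 := exp_abs_sub_le h1 (hBgle s h0 hsb)
      have h3 : (-B s) - (-Bg s) = Bg s - B s := by ring
      calc |Real.exp (-B s) - Real.exp (-Bg s)|
          ≤ Real.exp 1 * |(-B s) - (-Bg s)| := h2
        _ = Real.exp 1 * |Bg s - B s| := by rw [h3]
        _ ≤ Real.exp 1 * ε :=
            mul_le_mul_of_nonneg_left (hL1 s h0 hsb) (Real.exp_pos _).le
    have hexpBg_le : ∀ s : ℝ, 0 ≤ s → s ≤ b → Real.exp (-Bg s) ≤ Real.exp 1 :=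
      fun s h0 hsb => Real.exp_le_exp.2 (hBgle s h0 hsb)
    -- derivative of the approximate product
    have hug_deriv : ∀ t ∈ Set.uIcc a b, HasDerivAt (fun t => C t * Real.exp (-Bg t))
        (Real.exp (-Bg t) * ((β t - g t) * C t - G * C (t - τ))) t := by
      intro t ht
      rw [Set.uIcc_of_le hab] at ht
      have h1 : HasDerivAt C (β t * C t - G * C (t - τ)) t := hODE t ht
      have h2 : HasDerivAt (fun t => Real.exp (-Bg t)) (Real.exp (-Bg t) * (-g t)) t :=
        ((hBg_deriv t).neg).exp
      have h3 := h1.mul h2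
      exact h3.congr_deriv (by ring)
    have hβgC_int : IntervalIntegrable (fun s => (β s - g s) * C s) volume a b :=
      hInt_mulC _ ((hβ_loc a b).sub (hgint.intervalIntegrable (a := a) (b := b)))
    have hCd_int := hInt_Cdel
    have hBgexp_cont : Continuous fun s => Real.exp (-Bg s) :=
      ((continuous_iff_continuousAt.2 fun t => (hBg_deriv t).continuousAt).neg).rexp
    have hint1 : IntervalIntegrable (fun s => Real.exp (-Bg s) * ((β s - g s) * C s))
        volume a b := hβgC_int.continuousOn_mul hBgexp_cont.continuousOn
    have hint2 : IntervalIntegrable (fun s => Real.exp (-Bg s) * C (s - τ)) volume a b :=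
      hCd_int.continuousOn_mul hBgexp_cont.continuousOn
    have hdug_int : IntervalIntegrable
        (fun t => Real.exp (-Bg t) * ((β t - g t) * C t - G * C (t - τ))) volume a b := by
      have h1 := hint1.sub (hint2.const_mul G)
      have heq2 : (fun t => Real.exp (-Bg t) * ((β t - g t) * C t - G * C (t - τ)))
          = fun t => Real.exp (-Bg t) * ((β t - g t) * C t)
            - G * (Real.exp (-Bg t) * C (t - τ)) := by
        funext t; ring
      rw [heq2]; exact h1
    have hFTC := intervalIntegral.integral_eq_sub_of_hasDerivAt hug_deriv hdug_int
    have hsplit : ∫ t in a..b, Real.exp (-Bg t) * ((β t - g t) * C t - G * C (t - τ))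
        = (∫ t in a..b, Real.exp (-Bg t) * ((β t - g t) * C t))
          - G * ∫ t in a..b, Real.exp (-Bg t) * C (t - τ) := by
      rw [← intervalIntegral.integral_const_mul,
        ← intervalIntegral.integral_sub hint1 (hint2.const_mul G)]
      exact intervalIntegral.integral_congr fun t _ => by ring
    have hmain : C b * Real.exp (-Bg b) - C a * Real.exp (-Bg a)
        = (∫ t in a..b, Real.exp (-Bg t) * ((β t - g t) * C t))
          - G * ∫ t in a..b, Real.exp (-Bg t) * C (t - τ) := by
      rw [← hsplit, hFTC]
    -- bounds
    have hterm1 : |∫ t in a..b, Real.exp (-Bg t) * ((β t - g t) * C t)|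
        ≤ Real.exp 1 * ε * M := by
      have hbound : ∀ᵐ t ∂(volume.restrict (Set.uIoc a b)),
          ‖Real.exp (-Bg t) * ((β t - g t) * C t)‖ ≤ Real.exp 1 * M * ‖β t - g t‖ := by
        filter_upwards [ae_restrict_mem measurableSet_uIoc] with t ht
        have ht1 : a < t := lt_of_le_of_lt (le_inf le_rfl hab) ht.1
        have ht2 : t ≤ b := le_trans ht.2 (sup_le hab le_rfl)
        have h0t : 0 ≤ t := le_trans ha ht1.le
        rw [Real.norm_eq_abs, abs_mul, abs_mul, Real.norm_eq_abs]
        have e1 : |Real.exp (-Bg t)| ≤ Real.exp 1 := by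
          rw [abs_of_pos (Real.exp_pos _)]; exact hexpBg_le t h0t ht2
        have e2 : |C t| ≤ M := hM t ⟨by linarith, ht2⟩
        calc |Real.exp (-Bg t)| * (|β t - g t| * |C t|)
            ≤ Real.exp 1 * (|β t - g t| * M) := by
              apply mul_le_mul e1 (mul_le_mul_of_nonneg_left e2 (abs_nonneg _))
                (by positivity) (Real.exp_pos _).le
          _ = Real.exp 1 * M * |β t - g t| := by ring
      have hbint : IntervalIntegrable (fun t => Real.exp 1 * M * ‖β t - g t‖) volume a b :=
        (((hβ_loc a b).sub (hgint.intervalIntegrable (a := a) (b := b))).norm).const_mul _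
      have h2 := intervalIntegral.norm_integral_le_abs_of_norm_le hbound hbint
      have h3 : ∫ t in a..b, ‖β t - g t‖ ≤ ε := by
        rw [intervalIntegral.integral_of_le hab]
        calc ∫ t in Set.Ioc a b, ‖β t - g t‖ = ∫ t in Set.Ioc a b, ‖φ t - g t‖ := by
              apply setIntegral_congr_fun measurableSet_Ioc
              intro t ht
              have hmem : t ∈ Set.Ioc (0:ℝ) b := ⟨lt_of_le_of_lt ha ht.1, ht.2⟩
              have hφt : φ t = β t := Set.indicator_of_mem hmem β
              simp only [hφt]
          _ ≤ ∫ t, ‖φ t - g t‖ := setIntegral_le_integral ((hφint.sub hgint).norm)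
              (Filter.Eventually.of_forall fun x => norm_nonneg _)
          _ ≤ ε := hgdist
      have h4 : (0:ℝ) ≤ ∫ t in a..b, ‖β t - g t‖ :=
        intervalIntegral.integral_nonneg hab fun t _ => norm_nonneg _
      have h5 : |∫ t in a..b, Real.exp 1 * M * ‖β t - g t‖|
          = Real.exp 1 * M * ∫ t in a..b, ‖β t - g t‖ := by
        rw [intervalIntegral.integral_const_mul, abs_of_nonneg (by positivity)]
      rw [← Real.norm_eq_abs]
      calc ‖∫ t in a..b, Real.exp (-Bg t) * ((β t - g t) * C t)‖
          ≤ |∫ t in a..b, Real.exp 1 * M * ‖β t - g t‖| := h2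
        _ = Real.exp 1 * M * ∫ t in a..b, ‖β t - g t‖ := h5
        _ ≤ Real.exp 1 * M * ε := by
            apply mul_le_mul_of_nonneg_left h3 (by positivity)
        _ = Real.exp 1 * ε * M := by ring
    have hIg_close : |(∫ s in a..b, Real.exp (-Bg s) * C (s - τ)) - I|
        ≤ Real.exp 1 * ε * M * (b - a) := by
      rw [hIdef, ← intervalIntegral.integral_sub hint2 hIint]
      have hb1 : ∀ s ∈ Set.uIoc a b,
          ‖Real.exp (-Bg s) * C (s - τ) - Real.exp (-B s) * C (s - τ)‖
            ≤ Real.exp 1 * ε * M := by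
        intro s hs
        have hs1 : a < s := lt_of_le_of_lt (le_inf le_rfl hab) hs.1
        have hs2 : s ≤ b := le_trans hs.2 (sup_le hab le_rfl)
        have h0s : 0 ≤ s := le_trans ha hs1.le
        have hre : Real.exp (-Bg s) * C (s - τ) - Real.exp (-B s) * C (s - τ)
            = (Real.exp (-Bg s) - Real.exp (-B s)) * C (s - τ) := by ring
        rw [hre, Real.norm_eq_abs, abs_mul]
        have e1 : |Real.exp (-Bg s) - Real.exp (-B s)| ≤ Real.exp 1 * ε := by
          rw [abs_sub_comm]; exact hexp_close s h0s hs2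
        have e2 : |C (s - τ)| ≤ M := hM _ ⟨by linarith, by linarith⟩
        exact mul_le_mul e1 e2 (abs_nonneg _) (by positivity)
      have h5 := intervalIntegral.norm_integral_le_of_norm_le_const hb1
      rw [abs_of_nonneg (by linarith : (0:ℝ) ≤ b - a)] at h5
      rw [← Real.norm_eq_abs]
      exact h5
    have hpt : ∀ x : ℝ, a ≤ x → x ≤ b →
        |C x * Real.exp (-B x) - C x * Real.exp (-Bg x)| ≤ Real.exp 1 * ε * M := by
      intro x hax hxb
      have h0 : 0 ≤ x := le_trans ha hax
      have hre : C x * Real.exp (-B x) - C x * Real.exp (-Bg x)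
          = (Real.exp (-B x) - Real.exp (-Bg x)) * C x := by ring
      rw [hre, abs_mul]
      exact mul_le_mul (hexp_close x h0 hxb) (hM x ⟨by linarith, hxb⟩)
        (abs_nonneg _) (by positivity)
    -- assemble
    have hXeq : X = (C b * Real.exp (-B b) - C b * Real.exp (-Bg b))
        - (C a * Real.exp (-B a) - C a * Real.exp (-Bg a))
        + (∫ t in a..b, Real.exp (-Bg t) * ((β t - g t) * C t))
        - G * ((∫ t in a..b, Real.exp (-Bg t) * C (t - τ)) - I) := by
      rw [hXdef]
      have := hmain
      ring_nf
      ring_nf at this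
      linarith
    have A1 := hpt b hab le_rfl
    have A2 := hpt a le_rfl hab
    have A4' : |G * ((∫ t in a..b, Real.exp (-Bg t) * C (t - τ)) - I)|
        ≤ G * (Real.exp 1 * ε * M * (b - a)) := by
      rw [abs_mul, abs_of_pos hG]
      exact mul_le_mul_of_nonneg_left hIg_close hG.le
    have habs : |X| ≤ |C b * Real.exp (-B b) - C b * Real.exp (-Bg b)|
        + |C a * Real.exp (-B a) - C a * Real.exp (-Bg a)|
        + |∫ t in a..b, Real.exp (-Bg t) * ((β t - g t) * C t)|
        + |G * ((∫ t in a..b, Real.exp (-Bg t) * C (t - τ)) - I)| := by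
      rw [hXeq]
      set w := C b * Real.exp (-B b) - C b * Real.exp (-Bg b)
      set x := C a * Real.exp (-B a) - C a * Real.exp (-Bg a)
      set y := ∫ t in a..b, Real.exp (-Bg t) * ((β t - g t) * C t)
      set z := G * ((∫ t in a..b, Real.exp (-Bg t) * C (t - τ)) - I)
      calc |w - x + y - z| ≤ |w - x + y| + |z| := abs_sub _ _
        _ ≤ |w - x| + |y| + |z| := by linarith [abs_add_le (w - x) y]
        _ ≤ |w| + |x| + |y| + |z| := by linarith [abs_sub w x]
    have hfin : 3 * (Real.exp 1 * ε * M) + G * (Real.exp 1 * ε * M * (b - a))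
        = ε * (Real.exp 1 * M * (3 + G * (b - a))) := by ring
    linarith [hterm1, A1, A2, A4', habs]
  -- conclude X = 0
  have hX0 : X = 0 := by
    by_contra hne
    have habs : 0 < |X| := abs_pos.2 hne
    have hK1 : (0:ℝ) < Real.exp 1 * M * (3 + G * (b - a)) + 1 := by linarith
    have hεpos : 0 < min 1 (|X| / (2 * (Real.exp 1 * M * (3 + G * (b - a)) + 1))) :=
      lt_min one_pos (by positivity)
    have h2 := key _ hεpos (min_le_left _ _)
    have h3 := min_le_right 1 (|X| / (2 * (Real.exp 1 * M * (3 + G * (b - a)) + 1)))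
    have h4 : min 1 (|X| / (2 * (Real.exp 1 * M * (3 + G * (b - a)) + 1)))
          * (Real.exp 1 * M * (3 + G * (b - a)))
        ≤ (|X| / (2 * (Real.exp 1 * M * (3 + G * (b - a)) + 1)))
          * (Real.exp 1 * M * (3 + G * (b - a))) :=
      mul_le_mul_of_nonneg_right h3 hK0
    have h5 : (|X| / (2 * (Real.exp 1 * M * (3 + G * (b - a)) + 1)))
          * (Real.exp 1 * M * (3 + G * (b - a))) < |X| := by
      rw [div_mul_eq_mul_div, div_lt_iff₀ (by linarith)]
      nlinarith
    linarith
  have hfinal : C b * Real.exp (-B b) - C a * Real.exp (-B a) + G * I = 0 := by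
    rw [← hXdef]; exact hX0
  rw [hIdef] at hfinal ⊢
  linarith

/-- Main theorem: explicit upper bound for the solution of the CO2 delay
differential equation `C' = β C - G C(· - τ)` with constant initial history. -/
theorem co2_upper_bound
    (T : EReal) (hT : (0 : EReal) < T)
    (C0 : ℝ) (hC0 : 0 ≤ C0) (τ : ℝ) (hτ : 0 < τ) (G : ℝ) (hG : 0 < G)
    (β : ℝ → ℝ) (hβ_nonneg : ∀ t, 0 ≤ β t)
    (hβ_loc : ∀ p q : ℝ, IntervalIntegrable β volume p q)
    (C : ℝ → ℝ) (hC_meas : Measurable C)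
    (hC_bdd : ∀ K : ℝ, ∃ M : ℝ, ∀ t ∈ Set.Icc (-τ) K, C t ≤ M)
    (hC_nonneg : ∀ t : ℝ, -τ ≤ t → (t : EReal) < T → 0 ≤ C t)
    (hC_hist : ∀ s ∈ Set.Icc (-τ) (0 : ℝ), C s = C0)
    (hC_ode : ∀ t : ℝ, 0 ≤ t → (t : EReal) < T →
      HasDerivAt C (β t * C t - G * C (t - τ)) t) :
    ∀ t : ℝ, 0 ≤ t → (t : EReal) < T →
      C t ≤ C0 * Real.exp (∫ s in (0 : ℝ)..t,
        (β s + (-G * Real.exp (-∫ u in (s - τ)..s, β u)))) := by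
  intro t0 ht00 ht0T
  have hcoe : ∀ s : ℝ, s ≤ t0 → (s : EReal) < T := fun s hs =>
    lt_of_le_of_lt (EReal.coe_le_coe_iff.2 hs) ht0T
  set B : ℝ → ℝ := fun t => ∫ s in (0:ℝ)..t, β s with hBdef
  have hBcont : Continuous B := intervalIntegral.continuous_primitive hβ_loc 0
  have hBadd : ∀ x y : ℝ, B y - B x = ∫ s in x..y, β s := by
    intro x y
    have h := intervalIntegral.integral_add_adjacent_intervals (hβ_loc 0 x) (hβ_loc x y)
    simp only [hBdef]
    linarith
  have hB0 : B 0 = 0 := intervalIntegral.integral_same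
  have hBmono : Monotone B := by
    intro x y hxy
    have h := hBadd x y
    have h2 : 0 ≤ ∫ s in x..y, β s :=
      intervalIntegral.integral_nonneg hxy fun u _ => hβ_nonneg u
    linarith
  set γ : ℝ → ℝ := fun s => -G * Real.exp (B (s - τ) - B s) with hγdef
  have hγeq : ∀ s : ℝ, -G * Real.exp (-∫ u in (s - τ)..s, β u) = γ s := by
    intro s
    simp only [hγdef, ← hBadd (s - τ) s, neg_sub]
  have hγcont : Continuous γ :=
    continuous_const.mul (((hBcont.comp (continuous_sub_right τ)).sub hBcont).rexp)
  have hγnonpos : ∀ s, γ s ≤ 0 := by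
    intro s
    have := Real.exp_pos (B (s - τ) - B s)
    simp only [hγdef]
    nlinarith
  obtain ⟨M0, hM0⟩ := hC_bdd t0
  set M : ℝ := max M0 0 with hMdef
  have hMnonneg : 0 ≤ M := le_max_right _ _
  have hM : ∀ s ∈ Set.Icc (-τ) t0, |C s| ≤ M := by
    intro s hs
    rw [abs_of_nonneg (hC_nonneg s hs.1 (hcoe s hs.2))]
    exact le_trans (hM0 s hs) (le_max_left _ _)
  have hCcontAt : ∀ x : ℝ, 0 ≤ x → x ≤ t0 → ContinuousAt C x := fun x hx hx' =>
    (hC_ode x hx (hcoe x hx')).continuousAt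
  -- integrability helpers
  have hInt_mulC : ∀ (h : ℝ → ℝ) (a b : ℝ), 0 ≤ a → a ≤ b → b ≤ t0 →
      IntervalIntegrable h volume a b →
      IntervalIntegrable (fun s => h s * C s) volume a b := by
    intro h a b ha hab hb hh
    rw [intervalIntegrable_iff] at hh ⊢
    have key : Integrable (fun s => C s * h s) (volume.restrict (Set.uIoc a b)) := by
      apply Integrable.bdd_mul (c := M) hh
        (hC_meas.aestronglyMeasurable.restrict)
      filter_upwards [ae_restrict_mem measurableSet_uIoc] with x hx
      have hx1 : a < x := lt_of_le_of_lt (le_inf le_rfl hab) hx.1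
      have hx2 : x ≤ b := le_trans hx.2 (sup_le hab le_rfl)
      exact hM x ⟨by linarith, le_trans hx2 hb⟩
    have : (fun s => h s * C s) = fun s => C s * h s := by funext s; ring
    rw [this]; exact key
  have hInt_Cdel : ∀ a b : ℝ, 0 ≤ a → a ≤ b → b ≤ t0 →
      IntervalIntegrable (fun s => C (s - τ)) volume a b := by
    intro a b ha hab hb
    rw [intervalIntegrable_iff]
    have hmeas2 : Measurable fun s : ℝ => C (s - τ) :=
      hC_meas.comp (measurable_id.sub measurable_const)
    apply Integrable.mono' (f := fun s : ℝ => C (s - τ)) (g := fun _ => M)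
      (integrableOn_const measure_Ioc_lt_top.ne)
      (hmeas2.aestronglyMeasurable.restrict)
    filter_upwards [ae_restrict_mem measurableSet_uIoc] with x hx
    have hx1 : a < x := lt_of_le_of_lt (le_inf le_rfl hab) hx.1
    have hx2 : x ≤ b := le_trans hx.2 (sup_le hab le_rfl)
    exact hM (x - τ) ⟨by linarith, by linarith⟩
  have hInt_main : ∀ a b : ℝ, 0 ≤ a → a ≤ b → b ≤ t0 →
      IntervalIntegrable (fun s => Real.exp (-B s) * C (s - τ)) volume a b := by
    intro a b ha hab hb
    have := (hInt_Cdel a b ha hab hb).continuousOn_mul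
      ((hBcont.neg.rexp).continuousOn : ContinuousOn (fun s => Real.exp (-B s)) (Set.uIcc a b))
    exact this
  -- Key identity (Claim A)
  have keyA : ∀ a b : ℝ, 0 ≤ a → a ≤ b → b ≤ t0 →
      C b * Real.exp (-B b) - C a * Real.exp (-B a)
        = -G * ∫ s in a..b, Real.exp (-B s) * C (s - τ) := by
    intro a b ha hab hb
    simp only [hBdef]
    exact co2_keyA τ G M a b hτ hG hMnonneg ha hab β C hβ_loc hβ_nonneg hC_meas
      (fun s hs => hM s ⟨by linarith [hs.1, hτ.le], le_trans hs.2 hb⟩)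
      (fun t ht => hC_ode t (le_trans ha ht.1) (hcoe t (le_trans ht.2 hb)))
  have hu_mono : ∀ a b : ℝ, 0 ≤ a → a ≤ b → b ≤ t0 →
      C b * Real.exp (-B b) ≤ C a * Real.exp (-B a) := by
    intro a b ha hab hb
    have h := keyA a b ha hab hb
    have hI : 0 ≤ ∫ s in a..b, Real.exp (-B s) * C (s - τ) := by
      apply intervalIntegral.integral_nonneg hab
      intro s hs
      exact mul_nonneg (Real.exp_pos _).le
        (hC_nonneg (s - τ) (by linarith [hs.1]) (hcoe (s - τ) (by linarith [hs.2, hτ.le])))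
    nlinarith
  have hu0 : C 0 * Real.exp (-B 0) = C0 := by
    rw [hB0, hC_hist 0 ⟨by linarith, le_refl 0⟩]
    simp
  -- pointwise comparison of integrands
  have hptwise : ∀ s : ℝ, 0 ≤ s → s ≤ t0 →
      -G * (Real.exp (-B s) * C (s - τ)) ≤ γ s * (C s * Real.exp (-B s)) := by
    intro s h0 hst
    have hkey : Real.exp (B (s - τ)) * (C s * Real.exp (-B s)) ≤ C (s - τ) := by
      by_cases hsτ : s ≤ τ
      · have h1 : C (s - τ) = C0 := hC_hist _ ⟨by linarith, by linarith⟩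
        have h2 : C s * Real.exp (-B s) ≤ C0 := by
          have := hu_mono 0 s le_rfl h0 hst
          rw [hu0] at this; exact this
        have h3 : Real.exp (B (s - τ)) ≤ 1 := by
          apply Real.exp_le_one_iff.2
          have : B (s - τ) ≤ B 0 := hBmono (by linarith)
          linarith [hB0]
        have h4 : 0 ≤ C s * Real.exp (-B s) :=
          mul_nonneg (hC_nonneg s (by linarith) (hcoe s hst)) (Real.exp_pos _).le
        nlinarith
      · push_neg at hsτ
        have h4 := hu_mono (s - τ) s (by linarith) (by linarith) hst
        have h5 : Real.exp (B (s - τ)) * Real.exp (-B (s - τ)) = 1 := by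
          rw [← Real.exp_add]; simp
        have h6 := Real.exp_pos (B (s - τ))
        nlinarith [hC_nonneg (s - τ) (by linarith) (hcoe (s - τ) (by linarith))]
    have hsplit : Real.exp (B (s - τ) - B s) = Real.exp (B (s - τ)) * Real.exp (-B s) := by
      rw [← Real.exp_add]; ring_nf
    simp only [hγdef, hsplit]
    nlinarith [Real.exp_pos (-B s), mul_le_mul_of_nonneg_left hkey
      (mul_nonneg hG.le (Real.exp_pos (-B s)).le)]
  -- two-point integral inequality
  have hDineq : ∀ a b : ℝ, 0 ≤ a → a ≤ b → b ≤ t0 →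
      C b * Real.exp (-B b) ≤ C a * Real.exp (-B a)
        + ∫ s in a..b, γ s * (C s * Real.exp (-B s)) := by
    intro a b ha hab hb
    have h := keyA a b ha hab hb
    have hrw : -G * ∫ s in a..b, Real.exp (-B s) * C (s - τ)
        = ∫ s in a..b, -G * (Real.exp (-B s) * C (s - τ)) :=
      (intervalIntegral.integral_const_mul _ _).symm
    have hint1 : IntervalIntegrable (fun s => -G * (Real.exp (-B s) * C (s - τ))) volume a b :=
      (hInt_main a b ha hab hb).const_mul (-G)
    have hint2 : IntervalIntegrable (fun s => γ s * (C s * Real.exp (-B s))) volume a b := by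
      have h1 := (hInt_mulC γ a b ha hab hb (hγcont.intervalIntegrable a b)).mul_continuousOn
        ((hBcont.neg.rexp).continuousOn : ContinuousOn (fun s => Real.exp (-B s)) (Set.uIcc a b))
      have : (fun s => γ s * (C s * Real.exp (-B s)))
          = fun s => γ s * C s * Real.exp (-B s) := by funext s; ring
      rw [this]; exact h1
    have hmono := intervalIntegral.integral_mono_on hab hint1 hint2
      (fun s hs => hptwise s (le_trans ha hs.1) (le_trans hs.2 hb))
    rw [hrw] at h
    linarith [hmono]
  -- Gronwall comparison
  set u : ℝ → ℝ := fun t => C t * Real.exp (-B t) with hudef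
  set Γ : ℝ → ℝ := fun t => ∫ s in (0:ℝ)..t, γ s with hΓdef
  have hΓderiv : ∀ x : ℝ, HasDerivAt Γ (γ x) x := fun x =>
    (hγcont.integral_hasStrictDerivAt 0 x).hasDerivAt
  have hgron : ∀ ε : ℝ, 0 < ε → u t0 ≤ C0 * Real.exp (Γ t0) + ε * (1 + t0) := by
    intro ε hε
    have hucont : ContinuousOn u (Set.Icc 0 t0) := fun x hx =>
      ((hCcontAt x hx.1 hx.2).mul ((hBcont.neg.rexp).continuousAt)).continuousWithinAt
    have hBb : ∀ x : ℝ, HasDerivAt (fun t => C0 * Real.exp (Γ t) + ε * (1 + t))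
        (γ x * (C0 * Real.exp (Γ x)) + ε) x := by
      intro x
      have h1 : HasDerivAt (fun t => C0 * Real.exp (Γ t)) (C0 * (Real.exp (Γ x) * γ x)) x :=
        ((hΓderiv x).exp).const_mul C0
      have h2 : HasDerivAt (fun t : ℝ => ε * (1 + t)) (ε * 1) x :=
        ((hasDerivAt_id x).const_add 1).const_mul ε
      exact (h1.add h2).congr_deriv (by ring)
    have hslope : ∀ x ∈ Set.Ico 0 t0, ∀ r, γ x * u x < r →
        ∃ᶠ z in nhdsWithin x (Set.Ioi x), slope u x z < r := by
      intro x hx r hr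
      have hψ_meas : Measurable fun s => γ s * (C s * Real.exp (-B s)) :=
        (hγcont.measurable).mul (hC_meas.mul (hBcont.neg.rexp).measurable)
      have hψ_cont : ContinuousAt (fun s => γ s * (C s * Real.exp (-B s))) x :=
        (hγcont.continuousAt).mul ((hCcontAt x hx.1 hx.2.le).mul (hBcont.neg.rexp).continuousAt)
      have hd : HasDerivAt (fun z => ∫ s in x..z, γ s * (C s * Real.exp (-B s)))
          (γ x * (C x * Real.exp (-B x))) x :=
        intervalIntegral.integral_hasDerivAt_right (IntervalIntegrable.refl)
          (hψ_meas.aestronglyMeasurable.stronglyMeasurableAtFilter) hψ_cont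
      have htend := hasDerivAt_iff_tendsto_slope.1 hd
      have hsub : Set.Ioi x ⊆ {x}ᶜ := fun z hz => (ne_of_gt hz : z ≠ x)
      have htend' := htend.mono_left (nhdsWithin_mono x hsub)
      have hev1 := htend'.eventually_lt_const hr
      have hmem : Set.Ioc x t0 ∈ nhdsWithin x (Set.Ioi x) :=
        Ioc_mem_nhdsGT_of_mem ⟨le_rfl, hx.2⟩
      apply Filter.Eventually.frequently
      filter_upwards [hev1, hmem] with z hz1 hz2
      have hzx : 0 < z - x := by linarith [hz2.1]
      have hineq := hDineq x z hx.1 hz2.1.le hz2.2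
      have hz1' : (∫ s in x..z, γ s * (C s * Real.exp (-B s))) / (z - x) < r := by
        rw [slope_def_field, intervalIntegral.integral_same, sub_zero] at hz1
        exact hz1
      calc slope u x z = (u z - u x) / (z - x) := slope_def_field u x z
        _ ≤ (∫ s in x..z, γ s * (C s * Real.exp (-B s))) / (z - x) := by
            have hnum : u z - u x ≤ ∫ s in x..z, γ s * (C s * Real.exp (-B s)) := by
              have h1 : u z = C z * Real.exp (-B z) := rfl
              have h2 : u x = C x * Real.exp (-B x) := rfl
              rw [h1, h2]; linarith
            exact div_le_div_of_nonneg_right hnum hzx.le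
        _ < r := hz1'
    have hu0' : u 0 = C0 := hu0
    have hha : u 0 ≤ C0 * Real.exp (Γ 0) + ε * (1 + 0) := by
      have hΓ0 : Γ 0 = 0 := intervalIntegral.integral_same
      rw [hu0', hΓ0, Real.exp_zero]
      nlinarith
    have hbound : ∀ x ∈ Set.Ico 0 t0, u x = C0 * Real.exp (Γ x) + ε * (1 + x) →
        γ x * u x < γ x * (C0 * Real.exp (Γ x)) + ε := by
      intro x hx heq
      rw [heq]
      have h1 : γ x * (ε * (1 + x)) ≤ 0 :=
        mul_nonpos_of_nonpos_of_nonneg (hγnonpos x) (by nlinarith [hx.1])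
      nlinarith [hγnonpos x]
    exact image_le_of_liminf_slope_right_lt_deriv_boundary (f := u)
      (f' := fun x => γ x * u x) hucont hslope
      (B := fun t => C0 * Real.exp (Γ t) + ε * (1 + t))
      (B' := fun x => γ x * (C0 * Real.exp (Γ x)) + ε) hha hBb hbound ⟨ht00, le_rfl⟩
  have hfinal : u t0 ≤ C0 * Real.exp (Γ t0) := by
    by_contra hcon
    push_neg at hcon
    have h1 : (0:ℝ) < 1 + t0 := by linarith
    have hδpos : 0 < u t0 - C0 * Real.exp (Γ t0) := by linarith
    have h2 := hgron ((u t0 - C0 * Real.exp (Γ t0)) / (2 * (1 + t0))) (by positivity)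
    have h3 : (u t0 - C0 * Real.exp (Γ t0)) / (2 * (1 + t0)) * (1 + t0)
        = (u t0 - C0 * Real.exp (Γ t0)) / 2 := by field_simp
    rw [h3] at h2
    linarith
  -- conclude
  simp only [hγeq]
  rw [intervalIntegral.integral_add (hβ_loc 0 t0) (hγcont.intervalIntegrable 0 t0)]
  have hexp : Real.exp (-B t0) * Real.exp (B t0) = 1 := by rw [← Real.exp_add]; simp
  have step : C t0 * Real.exp (-B t0) * Real.exp (B t0)
      ≤ C0 * Real.exp (Γ t0) * Real.exp (B t0) :=
    mul_le_mul_of_nonneg_right hfinal (Real.exp_pos _).le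
  calc C t0 = C t0 * Real.exp (-B t0) * Real.exp (B t0) := by
        rw [mul_assoc, hexp, mul_one]
    _ ≤ C0 * Real.exp (Γ t0) * Real.exp (B t0) := step
    _ = C0 * Real.exp ((∫ s in (0:ℝ)..t0, β s) + ∫ s in (0:ℝ)..t0, γ s) := by
        rw [mul_assoc, ← Real.exp_add]
        simp only [hΓdef, hBdef]
        rw [add_comm]
end

section
/- Let $\beta : [0, \infty) \to \mathbb{R}^+$ be locally integrable with $\beta(t) = b > 0$ for all $t > t_2$ (for some $t_2 \ge 0$), let $\tau > 0$, $G > 0$, $C_0 \ge 0$, and suppose $C : [-\tau, \infty) \to \mathbb{R}^+$ solves $C'(t) = \beta(t) C(t) - G C(t - \tau)$ with constant initial history $C(s) = C_0$ on $[-\tau, 0]$. If $G > b e^{b\tau}$, then $\lim_{t \to \infty} C(t) = 0$. -/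
open MeasureTheory intervalIntegral Filter

/-- Asymptotic decay: if the terminal emission rate `b` satisfies
`G > b * exp (b * τ)`, then the CO2 concentration decays to zero. -/
theorem co2_asymptotic_decay
    (C0 : ℝ) (hC0 : 0 ≤ C0) (τ : ℝ) (hτ : 0 < τ) (G : ℝ) (hG : 0 < G)
    (b : ℝ) (hb : 0 < b) (t2 : ℝ) (ht2 : 0 ≤ t2)
    (β : ℝ → ℝ) (hβ_nonneg : ∀ t, 0 ≤ β t)
    (hβ_loc : ∀ p q : ℝ, IntervalIntegrable β volume p q)
    (hβ_term : ∀ t, t2 < t → β t = b)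
    (C : ℝ → ℝ)
    (hC_nonneg : ∀ t, -τ ≤ t → 0 ≤ C t)
    (hC_hist : ∀ s ∈ Set.Icc (-τ) (0 : ℝ), C s = C0)
    (hC_ode : ∀ t, 0 ≤ t → HasDerivAt C (β t * C t - G * C (t - τ)) t)
    (hdecay : G > b * Real.exp (b * τ)) :
    Tendsto C atTop (nhds 0) := by
  -- decay rate
  set k : ℝ := G * Real.exp (-(b * τ)) - b with hk_def
  have hk : 0 < k := by
    have h1 : b * Real.exp (b * τ) * Real.exp (-(b * τ)) < G * Real.exp (-(b * τ)) :=
      mul_lt_mul_of_pos_right hdecay (Real.exp_pos _)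
    rw [mul_assoc, ← Real.exp_add] at h1
    simp at h1
    simpa [hk_def] using sub_pos.mpr h1
  -- continuity of C on [0, ∞)
  have hCcont : ∀ s : ℝ, 0 ≤ s → ContinuousAt C s := fun s hs =>
    (hC_ode s hs).continuousAt
  -- Step A: for t > t2 + τ, C (t - τ) ≥ exp (-(b*τ)) * C t
  have stepA : ∀ t : ℝ, t2 + τ < t → Real.exp (-(b * τ)) * C t ≤ C (t - τ) := by
    intro t ht
    set g : ℝ → ℝ := fun s => C s * Real.exp (-(b * s)) with hg_def
    have hanti : AntitoneOn g (Set.Icc (t - τ) t) := by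
      apply antitoneOn_of_deriv_nonpos (convex_Icc _ _)
      · apply ContinuousOn.mul
        · intro s hs
          have hs0 : 0 ≤ s := le_trans (by linarith [hs.1]) (le_refl s)
          exact (hCcont s (by linarith [hs.1])).continuousWithinAt
        · exact (Real.continuous_exp.comp (continuous_const.mul continuous_id).neg).continuousOn
      · intro x hx
        rw [interior_Icc] at hx
        have hx0 : (0:ℝ) ≤ x := by linarith [hx.1]
        have hd : HasDerivAt g
            ((β x * C x - G * C (x - τ)) * Real.exp (-(b * x))
              + C x * (Real.exp (-(b * x)) * (-b))) x := by
          have h1 := hC_ode x hx0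
          have h2 : HasDerivAt (fun s => Real.exp (-(b * s))) (Real.exp (-(b * x)) * (-b)) x := by
            have : HasDerivAt (fun s : ℝ => -(b * s)) (-b) x := by
              exact (((hasDerivAt_id x).const_mul b).neg).congr_deriv (by ring)
            exact (Real.hasDerivAt_exp _).comp x this
          exact h1.mul h2
        exact hd.differentiableAt.differentiableWithinAt
      · intro x hx
        rw [interior_Icc] at hx
        have hx0 : (0:ℝ) ≤ x := by linarith [hx.1]
        have hxt2 : t2 < x := by linarith [hx.1]
        have hd : HasDerivAt g
            ((β x * C x - G * C (x - τ)) * Real.exp (-(b * x))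
              + C x * (Real.exp (-(b * x)) * (-b))) x := by
          have h1 := hC_ode x hx0
          have h2 : HasDerivAt (fun s => Real.exp (-(b * s))) (Real.exp (-(b * x)) * (-b)) x := by
            have : HasDerivAt (fun s : ℝ => -(b * s)) (-b) x := by
              exact (((hasDerivAt_id x).const_mul b).neg).congr_deriv (by ring)
            exact (Real.hasDerivAt_exp _).comp x this
          exact h1.mul h2
        rw [hd.deriv]
        have hβx : β x = b := hβ_term x hxt2
        have hCx : 0 ≤ C (x - τ) := hC_nonneg _ (by linarith)
        rw [hβx]
        have : (b * C x - G * C (x - τ)) * Real.exp (-(b * x))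
            + C x * (Real.exp (-(b * x)) * (-b))
            = -(G * C (x - τ) * Real.exp (-(b * x))) := by ring
        rw [this]
        have := mul_nonneg (mul_nonneg hG.le hCx) (Real.exp_pos (-(b * x))).le
        linarith
    have hmem1 : t - τ ∈ Set.Icc (t - τ) t := ⟨le_refl _, by linarith⟩
    have hmem2 : t ∈ Set.Icc (t - τ) t := ⟨by linarith, le_refl _⟩
    have h := hanti hmem1 hmem2 (by linarith)
    -- h : g t ≤ g (t - τ)
    have hpos := Real.exp_pos (b * (t - τ))
    have h2 : g t * Real.exp (b * (t - τ)) ≤ g (t - τ) * Real.exp (b * (t - τ)) :=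
      mul_le_mul_of_nonneg_right h hpos.le
    simp only [hg_def] at h2
    rw [mul_assoc, mul_assoc, ← Real.exp_add, ← Real.exp_add] at h2
    have e1 : -(b * t) + b * (t - τ) = -(b * τ) := by ring
    have e2 : -(b * (t - τ)) + b * (t - τ) = 0 := by ring
    rw [e1, e2, Real.exp_zero, mul_one] at h2
    linarith [h2]
  -- Step B: C s * exp (k * s) antitone on [t2 + τ + 1, ∞)
  set T : ℝ := t2 + τ + 1 with hT_def
  set h : ℝ → ℝ := fun s => C s * Real.exp (k * s) with hh_def
  have hantiB : AntitoneOn h (Set.Ici T) := by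
    apply antitoneOn_of_deriv_nonpos (convex_Ici _)
    · apply ContinuousOn.mul
      · intro s hs
        exact (hCcont s (by simp only [Set.mem_Ici] at hs; linarith)).continuousWithinAt
      · exact (Real.continuous_exp.comp (continuous_const.mul continuous_id)).continuousOn
    · intro x hx
      rw [interior_Ici] at hx
      have hx0 : (0:ℝ) ≤ x := by simp only [Set.mem_Ioi] at hx; linarith
      have hd : HasDerivAt h
          ((β x * C x - G * C (x - τ)) * Real.exp (k * x)
            + C x * (Real.exp (k * x) * k)) x := by
        have h1 := hC_ode x hx0
        have h2 : HasDerivAt (fun s => Real.exp (k * s)) (Real.exp (k * x) * k) x := by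
          have : HasDerivAt (fun s : ℝ => k * s) k x := by
            simpa using (hasDerivAt_id x).const_mul k
          exact (Real.hasDerivAt_exp _).comp x this
        exact h1.mul h2
      exact hd.differentiableAt.differentiableWithinAt
    · intro x hx
      rw [interior_Ici] at hx
      simp only [Set.mem_Ioi] at hx
      have hx0 : (0:ℝ) ≤ x := by linarith
      have hxt2 : t2 < x := by linarith
      have hd : HasDerivAt h
          ((β x * C x - G * C (x - τ)) * Real.exp (k * x)
            + C x * (Real.exp (k * x) * k)) x := by
        have h1 := hC_ode x hx0
        have h2 : HasDerivAt (fun s => Real.exp (k * s)) (Real.exp (k * x) * k) x := by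
          have : HasDerivAt (fun s : ℝ => k * s) k x := by
            simpa using (hasDerivAt_id x).const_mul k
          exact (Real.hasDerivAt_exp _).comp x this
        exact h1.mul h2
      rw [hd.deriv]
      have hβx : β x = b := hβ_term x hxt2
      have hA := stepA x (by linarith)
      -- G * C (x-τ) ≥ G * exp(-(b*τ)) * C x = (k + b) * C x
      have hGC : (k + b) * C x ≤ G * C (x - τ) := by
        have := mul_le_mul_of_nonneg_left hA hG.le
        calc (k + b) * C x = G * (Real.exp (-(b * τ)) * C x) := by
              rw [hk_def]; ring
          _ ≤ G * C (x - τ) := this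
      rw [hβx]
      have hexp := (Real.exp_pos (k * x)).le
      nlinarith [hC_nonneg x (by linarith), mul_le_mul_of_nonneg_right hGC hexp]
  -- conclude: for t ≥ T, C t ≤ (C T * exp (k * T)) * exp (-(k * t))
  have hbound : ∀ t : ℝ, T ≤ t → C t ≤ C T * Real.exp (k * T) * Real.exp (-(k * t)) := by
    intro t ht
    have := hantiB (Set.self_mem_Ici) (Set.mem_Ici.mpr ht) ht
    -- this : h t ≤ h T
    have h2 := mul_le_mul_of_nonneg_right this (Real.exp_pos (-(k * t))).le
    simp only [hh_def] at h2
    rw [mul_assoc, ← Real.exp_add] at h2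
    have e1 : k * t + -(k * t) = 0 := by ring
    rw [e1, Real.exp_zero, mul_one] at h2
    linarith [h2]
  -- squeeze
  have hlim : Tendsto (fun t => C T * Real.exp (k * T) * Real.exp (-(k * t))) atTop (nhds 0) := by
    have h1 : Tendsto (fun t : ℝ => -(k * t)) atTop atBot := by
      apply tendsto_neg_atBot_iff.mpr
      exact Tendsto.const_mul_atTop hk tendsto_id
    have h2 := Real.tendsto_exp_atBot.comp h1
    have := h2.const_mul (C T * Real.exp (k * T))
    simpa using this
  apply squeeze_zero' ?_ ?_ hlim
  · filter_upwards [eventually_ge_atTop (0:ℝ)] with t ht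
    exact hC_nonneg t (by linarith)
  · filter_upwards [eventually_ge_atTop T] with t ht
    exact hbound t ht
end

section
/- Let $t_0 < T \le \infty$, $\beta : [t_0, T) \to \mathbb{R}^+$ locally integrable, $G > 0$, $\tau > 0$, $C_0 \ge 0$, and suppose $C : [t_0 - \tau, T) \to \mathbb{R}^+$ is measurable, locally bounded and satisfies $C(t) \le C_0 + \int_{t_0}^t \beta(u) C(u)\,du - \int_{t_0}^t G\, C(u-\tau)\,du$ for $t \in [t_0, T)$. Then the function $y(t) := C(t) \exp(-\int_{t_0}^t \beta(v)\,dv)$ satisfies $y(t) \le C_0 - \int_{t_0}^t G \exp(-\int_{u-\tau}^u \beta(v)\,dv)\, y(u - \tau)\,du$ for $t \in [t_0, T)$. -/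
open MeasureTheory intervalIntegral

section Helpers
open Set



private lemma exp_neg_int (p q : ℝ) :
    ∫ s in p..q, Real.exp (-s) = Real.exp (-p) - Real.exp (-q) := by
  have h : ∀ s ∈ uIcc p q, HasDerivAt (fun x => -Real.exp (-x)) (Real.exp (-s)) s := by
    intro s _
    have := ((Real.hasDerivAt_exp (-s)).comp s (hasDerivAt_neg s)).neg
    simpa [Function.comp_def, Pi.neg_def] using this
  have := intervalIntegral.integral_eq_sub_of_hasDerivAt h
    ((Real.continuous_exp.comp continuous_neg).intervalIntegrable p q)
  simpa using this

private lemma s_exp_neg_int (L : ℝ) :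
    ∫ s in (0:ℝ)..L, s * Real.exp (-s)
      = 1 - Real.exp (-L) - L * Real.exp (-L) := by
  have h : ∀ s ∈ uIcc (0:ℝ) L, HasDerivAt (fun x => -((x + 1) * Real.exp (-x)))
      (s * Real.exp (-s)) s := by
    intro s _
    have h1 : HasDerivAt (fun x : ℝ => Real.exp (-x)) (-Real.exp (-s)) s := by
      have := (Real.hasDerivAt_exp (-s)).comp s (hasDerivAt_neg s)
      simpa [Function.comp_def] using this
    have h2 := (((hasDerivAt_id s).add_const (1:ℝ)).mul h1).neg
    refine HasDerivAt.congr_deriv h2 ?_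
    simp only [id_eq]
    ring
  have hi : IntervalIntegrable (fun s => s * Real.exp (-s)) volume 0 L :=
    (continuous_id.mul (Real.continuous_exp.comp continuous_neg)).intervalIntegrable 0 L
  have := intervalIntegral.integral_eq_sub_of_hasDerivAt h hi
  rw [this]
  simp [Real.exp_zero]
  ring

private lemma level_int (β : ℝ → ℝ) (hβ0 : ∀ t, 0 ≤ β t)
    (hβ : ∀ p q : ℝ, IntervalIntegrable β volume p q) (a b : ℝ) (hab : a ≤ b)
    (s : ℝ) (hs0 : 0 < s) (hsL : s ≤ ∫ x in a..b, β x) :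
    ∫ v in Icc a b ∩ {v | (∫ x in a..v, β x) < s}, β v = s := by
  set A : ℝ → ℝ := fun v => ∫ x in a..v, β x with hA
  have hA_cont : Continuous A := intervalIntegral.continuous_primitive hβ a
  have hA_mono : Monotone A := by
    intro u v huv
    have hadd := intervalIntegral.integral_add_adjacent_intervals (hβ a u) (hβ u v)
    have hnn : 0 ≤ ∫ x in u..v, β x :=
      intervalIntegral.integral_nonneg huv (fun x _ => hβ0 x)
    simp only [A]
    linarith [hadd]
  have hA_a : A a = 0 := intervalIntegral.integral_same
  set S : Set ℝ := Icc a b ∩ A ⁻¹' Ici s with hS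
  have hSne : S.Nonempty := ⟨b, ⟨hab, le_rfl⟩, hsL⟩
  have hSbdd : BddBelow S := ⟨a, fun v hv => hv.1.1⟩
  have hSclosed : IsClosed S := isClosed_Icc.inter (isClosed_Ici.preimage hA_cont)
  set c := sInf S with hc
  have hcS : c ∈ S := hSclosed.csInf_mem hSne hSbdd
  have hac : a ≤ c := hcS.1.1
  have hcb : c ≤ b := hcS.1.2
  have hsc : s ≤ A c := hcS.2
  have hlt : ∀ v, v ∈ Icc a b → v < c → A v < s := by
    intro v hv hvc
    by_contra hle
    push_neg at hle
    exact absurd (csInf_le hSbdd ⟨hv, hle⟩) (not_le.2 hvc)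
  have hAc : A c = s := by
    rcases eq_or_lt_of_le hac with h | h
    · exfalso
      have : A c = 0 := h ▸ hA_a
      linarith
    · refine le_antisymm ?_ hsc
      have ht : Filter.Tendsto A (nhdsWithin c (Iio c)) (nhds (A c)) :=
        (hA_cont.tendsto c).mono_left nhdsWithin_le_nhds
      refine le_of_tendsto ht ?_
      filter_upwards [Ioo_mem_nhdsLT_of_mem (⟨h, le_rfl⟩ : c ∈ Ioc a c)] with v hv
      exact (hlt v ⟨hv.1.le, hv.2.le.trans hcb⟩ hv.2).le
  have hseteq : Icc a b ∩ {v | A v < s} = Ico a c := by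
    ext v
    constructor
    · rintro ⟨hv, hvs⟩
      refine ⟨hv.1, ?_⟩
      by_contra hge
      push_neg at hge
      have := hA_mono hge
      rw [hAc] at this
      exact absurd (lt_of_le_of_lt this hvs) (lt_irrefl s)
    · rintro ⟨hav, hvc⟩
      exact ⟨⟨hav, hvc.le.trans hcb⟩, hlt v ⟨hav, hvc.le.trans hcb⟩ hvc⟩
  rw [hseteq, MeasureTheory.integral_Ico_eq_integral_Ioo,
    ← MeasureTheory.integral_Ioc_eq_integral_Ioo, ← intervalIntegral.integral_of_le hac]
  exact hAc

private lemma key_exp (β : ℝ → ℝ) (hβ0 : ∀ t, 0 ≤ β t)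
    (hβ : ∀ p q : ℝ, IntervalIntegrable β volume p q) (a b : ℝ) (hab : a ≤ b) :
    ∫ v in a..b, β v * Real.exp (-∫ x in a..v, β x)
      = 1 - Real.exp (-∫ x in a..b, β x) := by
  set A : ℝ → ℝ := fun v => ∫ x in a..v, β x with hA
  have hA_cont : Continuous A := intervalIntegral.continuous_primitive hβ a
  have hA_mono : Monotone A := by
    intro u v huv
    have hadd := intervalIntegral.integral_add_adjacent_intervals (hβ a u) (hβ u v)
    have hnn : 0 ≤ ∫ x in u..v, β x :=
      intervalIntegral.integral_nonneg huv (fun x _ => hβ0 x)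
    simp only [A]
    linarith [hadd]
  have hA_a : A a = 0 := intervalIntegral.integral_same
  set L := A b with hL
  have hL0 : 0 ≤ L := hA_a ▸ hA_mono hab
  have hβIcc : IntegrableOn β (Icc a b) :=
    (intervalIntegrable_iff_integrableOn_Icc_of_le hab).1 (hβ a b)
  set f : ℝ → ℝ → ℝ := fun v s => if A v < s then β v * Real.exp (-s) else 0 with hf
  have hΨ : Integrable (fun p : ℝ × ℝ => β p.1 * Real.exp (-p.2))
      ((volume.restrict (Icc a b)).prod (volume.restrict (Ioc 0 L))) :=
    Integrable.mul_prod hβIcc ((Real.continuous_exp.comp continuous_neg).integrableOn_Ioc)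
  have hset : MeasurableSet {p : ℝ × ℝ | A p.1 < p.2} :=
    measurableSet_lt (hA_cont.measurable.comp measurable_fst) measurable_snd
  have hfint : Integrable (Function.uncurry f)
      ((volume.restrict (Icc a b)).prod (volume.restrict (Ioc 0 L))) := by
    have heq : Function.uncurry f
        = Set.indicator {p : ℝ × ℝ | A p.1 < p.2} (fun p => β p.1 * Real.exp (-p.2)) := by
      funext p
      simp [Function.uncurry, Set.indicator_apply, f]
    rw [heq]
    exact hΨ.indicator hset
  have swap := MeasureTheory.integral_integral_swap hfint
  have hL_inner : ∀ v ∈ Icc a b,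
      (∫ s in Ioc 0 L, f v s) = β v * (Real.exp (-(A v)) - Real.exp (-L)) := by
    intro v hv
    have hAv0 : 0 ≤ A v := hA_a ▸ hA_mono hv.1
    have hAvL : A v ≤ L := hA_mono hv.2
    have heq : (fun s => f v s) = Set.indicator (Ioi (A v)) (fun s => β v * Real.exp (-s)) := by
      funext s
      simp [f, Set.indicator_apply, Set.mem_Ioi]
    rw [heq, MeasureTheory.integral_indicator measurableSet_Ioi,
      Measure.restrict_restrict measurableSet_Ioi]
    have hseteq : Ioi (A v) ∩ Ioc 0 L = Ioc (A v) L := by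
      ext x
      simp only [Set.mem_inter_iff, Set.mem_Ioi, Set.mem_Ioc]
      constructor
      · rintro ⟨h1, _, h3⟩; exact ⟨h1, h3⟩
      · rintro ⟨h1, h2⟩; exact ⟨h1, lt_of_le_of_lt hAv0 h1, h2⟩
    rw [hseteq, MeasureTheory.integral_const_mul, ← intervalIntegral.integral_of_le hAvL,
      exp_neg_int]
  have hR_inner : ∀ s ∈ Ioc 0 L,
      (∫ v in Icc a b, f v s) = s * Real.exp (-s) := by
    intro s hs
    have hmeas : MeasurableSet {v : ℝ | A v < s} := by
      have : {v : ℝ | A v < s} = A ⁻¹' Iio s := rfl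
      rw [this]
      exact measurableSet_Iio.preimage hA_cont.measurable
    have heq : (fun v => f v s) = Set.indicator {v : ℝ | A v < s} (fun v => β v * Real.exp (-s)) := by
      funext v
      simp [f, Set.indicator_apply]
    rw [heq, MeasureTheory.integral_indicator hmeas,
      Measure.restrict_restrict hmeas, Set.inter_comm, MeasureTheory.integral_mul_const,
      level_int β hβ0 hβ a b hab s hs.1 hs.2]
  have lhs_eq : (∫ v in Icc a b, ∫ s in Ioc 0 L, f v s)
      = ∫ v in Icc a b, β v * (Real.exp (-(A v)) - Real.exp (-L)) :=
    MeasureTheory.setIntegral_congr_fun measurableSet_Icc hL_inner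
  have rhs_eq : (∫ s in Ioc 0 L, ∫ v in Icc a b, f v s)
      = ∫ s in Ioc 0 L, s * Real.exp (-s) :=
    MeasureTheory.setIntegral_congr_fun measurableSet_Ioc hR_inner
  have main : (∫ v in Icc a b, β v * (Real.exp (-(A v)) - Real.exp (-L)))
      = ∫ s in Ioc 0 L, s * Real.exp (-s) := by
    rw [← lhs_eq, ← rhs_eq]
    exact swap
  have hrhs : (∫ s in Ioc 0 L, s * Real.exp (-s))
      = 1 - Real.exp (-L) - L * Real.exp (-L) := by
    rw [← intervalIntegral.integral_of_le hL0, s_exp_neg_int]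
  have hIβeA : IntervalIntegrable (fun v => β v * Real.exp (-(A v))) volume a b :=
    (hβ a b).mul_continuousOn
      ((Real.continuous_exp.comp (continuous_neg.comp hA_cont)).continuousOn)
  have hlhs : (∫ v in Icc a b, β v * (Real.exp (-(A v)) - Real.exp (-L)))
      = (∫ v in a..b, β v * Real.exp (-(A v))) - L * Real.exp (-L) := by
    rw [MeasureTheory.integral_Icc_eq_integral_Ioc, ← intervalIntegral.integral_of_le hab]
    have hsplit : (∫ v in a..b, β v * (Real.exp (-(A v)) - Real.exp (-L)))
        = (∫ v in a..b, β v * Real.exp (-(A v))) - ∫ v in a..b, β v * Real.exp (-L) := by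
      rw [← intervalIntegral.integral_sub hIβeA ((hβ a b).mul_const _)]
      congr 1
      funext v
      ring
    rw [hsplit, intervalIntegral.integral_mul_const]
  rw [hlhs, hrhs] at main
  have : (∫ v in a..b, β v * Real.exp (-(A v))) = 1 - Real.exp (-L) := by linarith
  simpa [A, L] using this

private lemma key_exp' (β : ℝ → ℝ) (hβ0 : ∀ t, 0 ≤ β t)
    (hβ : ∀ p q : ℝ, IntervalIntegrable β volume p q) (a w b : ℝ) (haw : a ≤ w) (hwb : w ≤ b) :
    ∫ u in w..b, β u * Real.exp (-∫ x in a..u, β x)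
      = Real.exp (-∫ x in a..w, β x) - Real.exp (-∫ x in a..b, β x) := by
  have base := key_exp β hβ0 hβ w b hwb
  have hsplit : ∀ u : ℝ, (∫ x in a..u, β x) = (∫ x in a..w, β x) + ∫ x in w..u, β x :=
    fun u => (intervalIntegral.integral_add_adjacent_intervals (hβ a w) (hβ w u)).symm
  have hcongr : (∫ u in w..b, β u * Real.exp (-∫ x in a..u, β x))
      = ∫ u in w..b, Real.exp (-∫ x in a..w, β x) * (β u * Real.exp (-∫ x in w..u, β x)) := by
    apply intervalIntegral.integral_congr
    intro u _
    show β u * Real.exp (-∫ x in a..u, β x)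
        = Real.exp (-∫ x in a..w, β x) * (β u * Real.exp (-∫ x in w..u, β x))
    rw [hsplit u, neg_add, Real.exp_add]
    ring
  rw [hcongr, intervalIntegral.integral_const_mul, base, hsplit b, neg_add, Real.exp_add]
  ring

private lemma fubini_triangle (a b : ℝ) (hab : a ≤ b) (g h : ℝ → ℝ)
    (hg : IntervalIntegrable g volume a b) (hh : IntervalIntegrable h volume a b) :
    ∫ u in a..b, g u * (∫ w in a..u, h w) = ∫ w in a..b, h w * (∫ u in w..b, g u) := by
  have hgIcc : IntegrableOn g (Icc a b) :=
    (intervalIntegrable_iff_integrableOn_Icc_of_le hab).1 hg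
  have hhIcc : IntegrableOn h (Icc a b) :=
    (intervalIntegrable_iff_integrableOn_Icc_of_le hab).1 hh
  set f : ℝ → ℝ → ℝ := fun u w => if w ≤ u then g u * h w else 0 with hf
  have hΨ : Integrable (fun p : ℝ × ℝ => g p.1 * h p.2)
      ((volume.restrict (Icc a b)).prod (volume.restrict (Icc a b))) :=
    Integrable.mul_prod hgIcc hhIcc
  have hset : MeasurableSet {p : ℝ × ℝ | p.2 ≤ p.1} :=
    measurableSet_le measurable_snd measurable_fst
  have hfint : Integrable (Function.uncurry f)
      ((volume.restrict (Icc a b)).prod (volume.restrict (Icc a b))) := by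
    have heq : Function.uncurry f
        = Set.indicator {p : ℝ × ℝ | p.2 ≤ p.1} (fun p => g p.1 * h p.2) := by
      funext p
      simp [Function.uncurry, Set.indicator_apply, f]
    rw [heq]
    exact hΨ.indicator hset
  have swap := MeasureTheory.integral_integral_swap hfint
  have hL_inner : ∀ u ∈ Icc a b,
      (∫ w in Icc a b, f u w) = g u * (∫ w in a..u, h w) := by
    intro u hu
    have heq : (fun w => f u w) = Set.indicator (Iic u) (fun w => g u * h w) := by
      funext w
      simp [f, Set.indicator_apply, Set.mem_Iic]
    rw [heq, MeasureTheory.integral_indicator measurableSet_Iic,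
      Measure.restrict_restrict measurableSet_Iic]
    have hseteq : Iic u ∩ Icc a b = Icc a u := by
      ext w
      simp only [Set.mem_inter_iff, Set.mem_Iic, Set.mem_Icc]
      constructor
      · rintro ⟨h1, h2, _⟩; exact ⟨h2, h1⟩
      · rintro ⟨h1, h2⟩; exact ⟨h2, h1, h2.trans (le_trans (le_refl u) hu.2)⟩
    rw [hseteq, MeasureTheory.integral_Icc_eq_integral_Ioc,
      ← intervalIntegral.integral_of_le hu.1, intervalIntegral.integral_const_mul]
  have hR_inner : ∀ w ∈ Icc a b,
      (∫ u in Icc a b, f u w) = h w * (∫ u in w..b, g u) := by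
    intro w hw
    have heq : (fun u => f u w) = Set.indicator (Ici w) (fun u => g u * h w) := by
      funext u
      simp [f, Set.indicator_apply, Set.mem_Ici]
    rw [heq, MeasureTheory.integral_indicator measurableSet_Ici,
      Measure.restrict_restrict measurableSet_Ici]
    have hseteq : Ici w ∩ Icc a b = Icc w b := by
      ext u
      simp only [Set.mem_inter_iff, Set.mem_Ici, Set.mem_Icc]
      constructor
      · rintro ⟨h1, _, h3⟩; exact ⟨h1, h3⟩
      · rintro ⟨h1, h2⟩; exact ⟨h1, hw.1.trans h1, h2⟩
    rw [hseteq, MeasureTheory.integral_Icc_eq_integral_Ioc,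
      ← intervalIntegral.integral_of_le hw.2, intervalIntegral.integral_mul_const]
    ring
  have lhs_eq : (∫ u in Icc a b, ∫ w in Icc a b, f u w)
      = ∫ u in Icc a b, g u * (∫ w in a..u, h w) :=
    MeasureTheory.setIntegral_congr_fun measurableSet_Icc hL_inner
  have rhs_eq : (∫ w in Icc a b, ∫ u in Icc a b, f u w)
      = ∫ w in Icc a b, h w * (∫ u in w..b, g u) :=
    MeasureTheory.setIntegral_congr_fun measurableSet_Icc hR_inner
  calc ∫ u in a..b, g u * (∫ w in a..u, h w)
      = ∫ u in Icc a b, g u * (∫ w in a..u, h w) := by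
        rw [MeasureTheory.integral_Icc_eq_integral_Ioc, ← intervalIntegral.integral_of_le hab]
    _ = ∫ w in Icc a b, h w * (∫ u in w..b, g u) := by
        rw [← lhs_eq, ← rhs_eq]; exact swap
    _ = ∫ w in a..b, h w * (∫ u in w..b, g u) := by
        rw [MeasureTheory.integral_Icc_eq_integral_Ioc, ← intervalIntegral.integral_of_le hab]

/-- Variation-of-constants reduction: the substitution `y(t) = C(t) e^{-∫_{t0}^t β}`
turns the delay integral inequality with a source term into one with only a
delayed sink term with effective rate `G e^{-∫_{t-τ}^t β}`. -/
theorem variation_of_constants_reduction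
    (t0 : ℝ) (T : EReal) (hT : (t0 : EReal) < T)
    (C0 : ℝ) (hC0 : 0 ≤ C0) (τ : ℝ) (hτ : 0 < τ) (G : ℝ) (hG : 0 < G)
    (β : ℝ → ℝ) (hβ_nonneg : ∀ t, 0 ≤ β t)
    (hβ_loc : ∀ p q : ℝ, IntervalIntegrable β volume p q)
    (C : ℝ → ℝ) (hC_meas : Measurable C)
    (hC_nonneg : ∀ t, t0 - τ ≤ t → (t : EReal) < T → 0 ≤ C t)
    (hC_bdd : ∀ K : ℝ, ∃ M : ℝ, ∀ t ∈ Set.Icc (t0 - τ) K, C t ≤ M)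
    (hC_ineq : ∀ t, t0 ≤ t → (t : EReal) < T →
      C t ≤ C0 + (∫ u in t0..t, β u * C u) - ∫ u in t0..t, G * C (u - τ))
    (y : ℝ → ℝ)
    (hy : ∀ t, y t = C t * Real.exp (-∫ v in t0..t, β v)) :
    ∀ t, t0 ≤ t → (t : EReal) < T →
      y t ≤ C0 - ∫ u in t0..t,
        G * Real.exp (-∫ v in (u - τ)..u, β v) * y (u - τ) := by
  intro t hat htT
  set B : ℝ → ℝ := fun v => ∫ x in t0..v, β x with hBdef
  have hB : ∀ v, B v = ∫ x in t0..v, β x := fun _ => rfl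
  obtain ⟨M, hM⟩ := hC_bdd t
  have hCnn : ∀ s ∈ Icc (t0 - τ) t, 0 ≤ C s := by
    intro s hs
    exact hC_nonneg s hs.1 (lt_of_le_of_lt (EReal.coe_le_coe_iff.2 hs.2) htT)
  have hCabs : ∀ s ∈ Icc (t0 - τ) t, ‖C s‖ ≤ max M 0 := by
    intro s hs
    rw [Real.norm_eq_abs, abs_of_nonneg (hCnn s hs)]
    exact le_max_of_le_left (hM s hs)
  have hsubIcc : Icc t0 t ⊆ Icc (t0 - τ) t := Icc_subset_Icc (by linarith) le_rfl
  have hsub : ∀ u ∈ Icc t0 t, u - τ ∈ Icc (t0 - τ) t := by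
    intro u hu
    exact ⟨by linarith [hu.1], by linarith [hu.2]⟩
  have hconst : IntegrableOn (fun _ : ℝ => max M 0) (Icc t0 t) volume :=
    integrableOn_const measure_Icc_lt_top.ne
  have hC_on : IntegrableOn C (Icc t0 t) volume := by
    refine Integrable.mono' hconst hC_meas.aestronglyMeasurable.restrict ?_
    rw [ae_restrict_iff' measurableSet_Icc]
    exact ae_of_all _ fun s hs => hCabs s (hsubIcc hs)
  have hCτ_meas : Measurable fun u : ℝ => C (u - τ) :=
    hC_meas.comp (measurable_id.sub_const τ)
  have hCτ_on : IntegrableOn (fun u => C (u - τ)) (Icc t0 t) volume := by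
    refine Integrable.mono' hconst hCτ_meas.aestronglyMeasurable.restrict ?_
    rw [ae_restrict_iff' measurableSet_Icc]
    exact ae_of_all _ fun s hs => hCabs (s - τ) (hsub s hs)
  have hC_ii : IntervalIntegrable C volume t0 t :=
    (intervalIntegrable_iff_integrableOn_Icc_of_le hat).2 hC_on
  have hCτ_ii : IntervalIntegrable (fun u => C (u - τ)) volume t0 t :=
    (intervalIntegrable_iff_integrableOn_Icc_of_le hat).2 hCτ_on
  have hβIcc : IntegrableOn β (Icc t0 t) volume :=
    (intervalIntegrable_iff_integrableOn_Icc_of_le hat).1 (hβ_loc t0 t)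
  have hβC_ii : IntervalIntegrable (fun u => β u * C u) volume t0 t := by
    refine (intervalIntegrable_iff_integrableOn_Icc_of_le hat).2 ?_
    have h1 : IntegrableOn (fun u => C u * β u) (Icc t0 t) volume := by
      refine Integrable.bdd_mul (c := max M 0) hβIcc hC_meas.aestronglyMeasurable.restrict ?_
      rw [ae_restrict_iff' measurableSet_Icc]
      exact ae_of_all _ fun s hs => hCabs s (hsubIcc hs)
    exact h1.congr (ae_of_all _ fun x => mul_comm _ _)
  set f : ℝ → ℝ := fun u => β u * C u - G * C (u - τ) with hfdef
  have hf_ii : IntervalIntegrable f volume t0 t := hβC_ii.sub (hCτ_ii.const_mul G)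
  set F : ℝ → ℝ := fun u => C0 + ∫ w in t0..u, f w with hFdef
  have hF : ∀ u, F u = C0 + ∫ w in t0..u, f w := fun _ => rfl
  have hpr_cont : ContinuousOn (fun u => ∫ w in t0..u, f w) (Icc t0 t) := by
    have := intervalIntegral.continuousOn_primitive_interval (μ := volume) (a := t0) (b := t)
      (f := f) (by rw [uIcc_of_le hat]; exact (intervalIntegrable_iff_integrableOn_Icc_of_le hat).1 hf_ii)
    rwa [uIcc_of_le hat] at this
  have hF_cont : ContinuousOn F (Icc t0 t) := continuousOn_const.add hpr_cont
  have hB_cont : Continuous B := intervalIntegral.continuous_primitive hβ_loc t0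
  have hE_cont : Continuous fun v => Real.exp (-B v) :=
    Real.continuous_exp.comp (continuous_neg.comp hB_cont)
  have hg_ii : IntervalIntegrable (fun u => β u * Real.exp (-B u)) volume t0 t :=
    (hβ_loc t0 t).mul_continuousOn hE_cont.continuousOn
  have hP_ii : IntervalIntegrable (fun u => β u * C u * Real.exp (-B u)) volume t0 t :=
    hβC_ii.mul_continuousOn hE_cont.continuousOn
  have hQ_ii : IntervalIntegrable (fun u => G * C (u - τ) * Real.exp (-B u)) volume t0 t :=
    (hCτ_ii.const_mul G).mul_continuousOn hE_cont.continuousOn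
  have hfe_ii : IntervalIntegrable (fun w => f w * Real.exp (-B w)) volume t0 t :=
    hf_ii.mul_continuousOn hE_cont.continuousOn
  have hR_ii : IntervalIntegrable (fun u => β u * Real.exp (-B u) * F u) volume t0 t :=
    hg_ii.mul_continuousOn (by rw [uIcc_of_le hat]; exact hF_cont)
  have hC_le_F : ∀ u ∈ Icc t0 t, C u ≤ F u := by
    intro u hu
    have h1 := hC_ineq u hu.1 (lt_of_le_of_lt (EReal.coe_le_coe_iff.2 hu.2) htT)
    have hmono : Set.uIcc t0 u ⊆ Set.uIcc t0 t := by
      rw [uIcc_of_le hat, uIcc_of_le hu.1]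
      exact Icc_subset_Icc le_rfl hu.2
    have h2 : (∫ w in t0..u, f w)
        = (∫ w in t0..u, β w * C w) - ∫ w in t0..u, G * C (w - τ) :=
      intervalIntegral.integral_sub (hβC_ii.mono_set hmono) ((hCτ_ii.const_mul G).mono_set hmono)
    rw [hF, h2]
    linarith
  -- Fubini step
  have swap := fubini_triangle t0 t hat (fun u => β u * Real.exp (-B u)) f hg_ii hf_ii
  have hEwt : ∀ w ∈ Icc t0 t,
      (∫ u in w..t, β u * Real.exp (-B u)) = Real.exp (-B w) - Real.exp (-B t) := by
    intro w hw
    exact key_exp' β hβ_nonneg hβ_loc t0 w t hw.1 hw.2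
  have swap' : (∫ u in t0..t, β u * Real.exp (-B u) * (∫ w in t0..u, f w))
      = ∫ w in t0..t, f w * (Real.exp (-B w) - Real.exp (-B t)) := by
    rw [swap]
    apply intervalIntegral.integral_congr
    intro w hw
    rw [uIcc_of_le hat] at hw
    dsimp only
    rw [hEwt w hw]
  have hrhs : (∫ w in t0..t, f w * (Real.exp (-B w) - Real.exp (-B t)))
      = (∫ w in t0..t, f w * Real.exp (-B w)) - (∫ w in t0..t, f w) * Real.exp (-B t) := by
    rw [← intervalIntegral.integral_mul_const,
      ← intervalIntegral.integral_sub hfe_ii (hf_ii.mul_const _)]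
    apply intervalIntegral.integral_congr
    intro w _
    dsimp only
    ring
  have hkey : (∫ u in t0..t, β u * Real.exp (-B u)) = 1 - Real.exp (-B t) :=
    key_exp β hβ_nonneg hβ_loc t0 t hat
  have hRsplit : (∫ u in t0..t, β u * Real.exp (-B u) * F u)
      = C0 * (1 - Real.exp (-B t))
        + ∫ u in t0..t, β u * Real.exp (-B u) * (∫ w in t0..u, f w) := by
    have heq : (fun u => β u * Real.exp (-B u) * F u)
        = fun u => β u * Real.exp (-B u) * C0 + β u * Real.exp (-B u) * (∫ w in t0..u, f w) := by
      funext u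
      rw [hF]
      ring
    rw [heq, intervalIntegral.integral_add (hg_ii.mul_const C0)
        (hg_ii.mul_continuousOn (by rw [uIcc_of_le hat]; exact hpr_cont)),
      intervalIntegral.integral_mul_const, hkey]
    ring
  have hPQ : (∫ w in t0..t, f w * Real.exp (-B w))
      = (∫ u in t0..t, β u * C u * Real.exp (-B u))
        - ∫ u in t0..t, G * C (u - τ) * Real.exp (-B u) := by
    rw [← intervalIntegral.integral_sub hP_ii hQ_ii]
    apply intervalIntegral.integral_congr
    intro w _
    dsimp only
    rw [hfdef]
    ring
  have hPR : (∫ u in t0..t, β u * C u * Real.exp (-B u))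
      ≤ ∫ u in t0..t, β u * Real.exp (-B u) * F u := by
    apply intervalIntegral.integral_mono_on hat hP_ii hR_ii
    intro u hu
    have h1 : 0 ≤ β u * Real.exp (-B u) := mul_nonneg (hβ_nonneg u) (Real.exp_pos _).le
    calc β u * C u * Real.exp (-B u) = β u * Real.exp (-B u) * C u := by ring
      _ ≤ β u * Real.exp (-B u) * F u :=
          mul_le_mul_of_nonneg_left (hC_le_F u hu) h1
  -- final algebra
  set P := ∫ u in t0..t, β u * C u * Real.exp (-B u) with hP
  set Q := ∫ u in t0..t, G * C (u - τ) * Real.exp (-B u) with hQ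
  set S := ∫ w in t0..t, f w with hS
  set R := ∫ u in t0..t, β u * Real.exp (-B u) * F u with hR
  have hchain : R = C0 * (1 - Real.exp (-B t)) + ((P - Q) - S * Real.exp (-B t)) := by
    rw [hRsplit, swap', hrhs, hPQ]
  have hyt : y t = C t * Real.exp (-B t) := hy t
  have hstep1 : C t * Real.exp (-B t) ≤ F t * Real.exp (-B t) :=
    mul_le_mul_of_nonneg_right (hC_le_F t ⟨hat, le_rfl⟩) (Real.exp_pos _).le
  have hFt : F t = C0 + S := hF t
  have hfinal : F t * Real.exp (-B t) ≤ C0 - Q := by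
    have : F t * Real.exp (-B t) = C0 + P - Q - R := by
      rw [hFt]
      linarith [hchain]
    rw [this]
    linarith [hPR]
  have hQeq : (∫ u in t0..t, G * Real.exp (-∫ v in (u - τ)..u, β v) * y (u - τ)) = Q := by
    rw [hQ]
    apply intervalIntegral.integral_congr
    intro u _
    dsimp only
    rw [hy (u - τ)]
    have hadd : (∫ v in t0..(u - τ), β v) + (∫ v in (u - τ)..u, β v) = ∫ x in t0..u, β x :=
      intervalIntegral.integral_add_adjacent_intervals (hβ_loc t0 (u - τ)) (hβ_loc (u - τ) u)
    rw [hB u, ← hadd, neg_add, Real.exp_add]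
    ring
  rw [hQeq, hyt]
  linarith

end Helpers
end
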